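/- (Remark 2.6 for g) Define, for ℓ > 0, x > 0, and n ∈ ℕ, g_{n,ℓ}(x) := (x/2)·((√(1 + (ℓ/(2x))²) + ℓ/(2x))^{2n} + (√(1 + (ℓ/(2x))²) − ℓ/(2x))^{2n}). Then for every x > 0 and every t ≥ 0, lim_{m→∞} g_{⌊tm⌋, 1/m}(x) = x·cosh(t/x); in particular, lim_{m→∞} g_{m, 1/m}(x) = x·cosh(1/x). -/

import Mathlib

open Filter Topology

/-! Since `√(1 + s²) ± s = exp (± arsinh s)`, the function `g_{n,ℓ}(x)` equals
`x cosh (2n arsinh (ℓ/(2x)))`. As `ℓ → 0` we have `arsinh (ℓ/(2x)) ~ ℓ/(2x)`, so whenever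
`nℓ → L` the argument of `cosh` tends to `L/x`; for `n = ⌊tm⌋`, `ℓ = 1/m` this gives `L = t`. -/

/-- `g ℓ n x = (x/2)·((√(1+(ℓ/2x)²) + ℓ/2x)^(2n) + (√(1+(ℓ/2x)²) − ℓ/2x)^(2n))`. -/
noncomputable def catenoidG (ℓ : ℝ) (n : ℕ) (x : ℝ) : ℝ :=
  (x/2) * ((Real.sqrt (1 + (ℓ/(2*x))^2) + ℓ/(2*x))^(2*n)
            + (Real.sqrt (1 + (ℓ/(2*x))^2) - ℓ/(2*x))^(2*n))

lemma catenoidG_eq_mul_cosh (ℓ x : ℝ) (n : ℕ) :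
    catenoidG ℓ n x = x * Real.cosh ((2 * n : ℝ) * Real.arsinh (ℓ / (2 * x))) := by
  rw [catenoidG]
  set s := ℓ / (2 * x)
  have h_add : Real.sqrt (1 + s ^ 2) + s = Real.exp (Real.arsinh s) := by
    rw [Real.exp_arsinh]; ring
  have h_sub : Real.sqrt (1 + s ^ 2) - s = Real.exp (-Real.arsinh s) := by
    rw [← Real.arsinh_neg, Real.exp_arsinh, neg_sq]; ring
  rw [h_add, h_sub, ← Real.exp_nat_mul, ← Real.exp_nat_mul, Real.cosh_eq]
  push_cast
  ring_nf

lemma tendsto_arsinh_const_mul_div_self (c : ℝ) :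
    Tendsto (fun ℓ : ℝ => Real.arsinh (c * ℓ) / ℓ) (𝓝[≠] 0) (𝓝 c) := by
  have h_deriv : HasDerivAt (fun ℓ : ℝ => Real.arsinh (c * ℓ)) c 0 := by
    simpa using ((hasDerivAt_id (0 : ℝ)).const_mul c).arsinh
  refine (hasDerivAt_iff_tendsto_slope.mp h_deriv).congr fun ℓ => ?_
  simp [slope_def_field]

lemma tendsto_catenoidG {α : Type*} {l : Filter α} {ℓ : α → ℝ} {n : α → ℕ} {L : ℝ}
    (hℓ : Tendsto ℓ l (𝓝[≠] 0)) (hnℓ : Tendsto (fun a => n a * ℓ a) l (𝓝 L)) (x : ℝ) :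
    Tendsto (fun a => catenoidG (ℓ a) (n a) x) l (𝓝 (x * Real.cosh (L / x))) := by
  have h_ratio : Tendsto (fun a => Real.arsinh ((2 * x)⁻¹ * ℓ a) / ℓ a) l (𝓝 (2 * x)⁻¹) :=
    (tendsto_arsinh_const_mul_div_self _).comp hℓ
  have h_arg : Tendsto (fun a => (2 * n a : ℝ) * Real.arsinh (ℓ a / (2 * x))) l
      (𝓝 (L / x)) := by
    have h_lim : L / x = 2 * L * (2 * x)⁻¹ := by field_simp
    rw [h_lim]
    refine ((hnℓ.const_mul 2).mul h_ratio).congr' ?_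
    filter_upwards [hℓ self_mem_nhdsWithin] with a (ha : ℓ a ≠ 0)
    field_simp
  simpa only [catenoidG_eq_mul_cosh, Function.comp_def] using
    ((Real.continuous_cosh.tendsto _).comp h_arg).const_mul x

theorem stmt_19_general (x : ℝ) :
    (∀ t : ℝ, 0 ≤ t →
      Tendsto (fun m : ℕ => catenoidG (1/(m:ℝ)) ⌊t*(m:ℝ)⌋₊ x) atTop
        (nhds (x * Real.cosh (t/x)))) ∧
    Tendsto (fun m : ℕ => catenoidG (1/(m:ℝ)) m x) atTop
      (nhds (x * Real.cosh (1/x))) := by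
  have h_step : Tendsto (fun m : ℕ => 1 / (m : ℝ)) atTop (𝓝[≠] 0) := by
    simpa only [one_div, Function.comp_def] using (tendsto_inv_atTop_nhdsGT_zero.mono_right
      (nhdsGT_le_nhdsNE 0)).comp tendsto_natCast_atTop_atTop
  have h_floor : ∀ t : ℝ, 0 ≤ t →
      Tendsto (fun m : ℕ => catenoidG (1/(m:ℝ)) ⌊t*(m:ℝ)⌋₊ x) atTop
        (nhds (x * Real.cosh (t/x))) := fun t ht =>
    tendsto_catenoidG h_step (by simpa only [mul_one_div, Function.comp_def] using
      (tendsto_nat_floor_mul_div_atTop ht).comp tendsto_natCast_atTop_atTop) x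
  refine ⟨h_floor, ?_⟩
  simpa using h_floor 1 zero_le_one

theorem stmt_19 (x : ℝ) (hx : 0 < x) :
    (∀ t : ℝ, 0 ≤ t →
      Tendsto (fun m : ℕ => catenoidG (1/(m:ℝ)) ⌊t*(m:ℝ)⌋₊ x) atTop
        (nhds (x * Real.cosh (t/x)))) ∧
    Tendsto (fun m : ℕ => catenoidG (1/(m:ℝ)) m x) atTop
      (nhds (x * Real.cosh (1/x))) :=
  stmt_19_general x
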